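/- arXiv:2410.08933 — 4 statements merged into one kernel-verified Lean document; each statement's English description precedes it below -/
import Mathlib

section
/- For any profinite space S, the abelian group C(S, ℤ) of continuous maps from S to the discrete group ℤ is a free abelian group. -/
namespace LocallyConstant

variable {X Y : Type*} [TopologicalSpace X] [TopologicalSpace Y] [DiscreteTopology Y]

def continuousMapLinearEquiv (R : Type*) [Semiring R] [AddCommMonoid Y] [Module R Y]
    [ContinuousAdd Y] [ContinuousConstSMul R Y] : LocallyConstant X Y ≃ₗ[R] C(X, Y) where
  __ := toContinuousMapLinearMap R
  invFun f := ⟨f, (IsLocallyConstant.iff_continuous f).mpr f.continuous⟩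
  left_inv _ := rfl
  right_inv _ := rfl

end LocallyConstant

/-- **Nöbeling's theorem.** For any profinite space `S`, the abelian group `C(S, ℤ)` of
continuous maps from `S` to the discrete group `ℤ` is a free abelian group
(i.e. free as a `ℤ`-module). -/
theorem stmt0 (S : Profinite.{u}) : Module.Free ℤ C(S, ℤ) :=
  -- freeness of `LocallyConstant S ℤ` is Mathlib's instance `LocallyConstant.freeOfProfinite`
  Module.Free.of_equiv (LocallyConstant.continuousMapLinearEquiv ℤ)
end

section
/- Let R be a profinite ring, let M → N → K be an exact sequence of profinite R-modules (algebraic exactness: the image of M → N equals the kernel of N → K), and let S be an extremally disconnected compact Hausdorff space. Then the induced sequence of abelian groups C(S, M) → C(S, N) → C(S, K) of continuous maps is exact. -/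
open ContinuousMap

/-- Let `R` be a profinite ring, `M → N → K` an (algebraically) exact sequence of
profinite `R`-modules, and `S` an extremally disconnected compact Hausdorff space.
Then the induced sequence `C(S, M) → C(S, N) → C(S, K)` of abelian groups of
continuous maps (given by postcomposition) is exact. -/
theorem stmt2 {R M N K : Type u}
    [Ring R] [TopologicalSpace R] [IsTopologicalRing R]
    [CompactSpace R] [T2Space R] [TotallyDisconnectedSpace R]
    [AddCommGroup M] [Module R M] [TopologicalSpace M] [IsTopologicalAddGroup M]
    [ContinuousSMul R M] [CompactSpace M] [T2Space M] [TotallyDisconnectedSpace M]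
    [AddCommGroup N] [Module R N] [TopologicalSpace N] [IsTopologicalAddGroup N]
    [ContinuousSMul R N] [CompactSpace N] [T2Space N] [TotallyDisconnectedSpace N]
    [AddCommGroup K] [Module R K] [TopologicalSpace K] [IsTopologicalAddGroup K]
    [ContinuousSMul R K] [CompactSpace K] [T2Space K] [TotallyDisconnectedSpace K]
    (f : M →ₗ[R] N) (hf : Continuous f) (g : N →ₗ[R] K) (hg : Continuous g)
    (hexact : Function.Exact f g)
    (S : Type u) [TopologicalSpace S] [CompactSpace S] [T2Space S] [ExtremallyDisconnected S] :
    Function.Exact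
      (fun m : C(S, M) => (ContinuousMap.mk f hf).comp m)
      (fun n : C(S, N) => (ContinuousMap.mk g hg).comp n) := by
  intro n
  constructor
  · intro hn
    -- n maps into range f
    have hmem : ∀ s : S, n s ∈ Set.range f := by
      intro s
      exact (hexact (n s)).mp (DFunLike.congr_fun hn s)
    haveI : CompactSpace (Set.range f) := isCompact_iff_compactSpace.mp
      ((isCompact_range hf))
    obtain ⟨h, h_cont, h_eq⟩ := CompactT2.ExtremallyDisconnected.projective (A := S)
      (Y := M) (Z := Set.range f)
      (f := fun s => (⟨n s, hmem s⟩ : Set.range f))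
      (g := fun m => (⟨f m, ⟨m, rfl⟩⟩ : Set.range f))
      (Continuous.subtype_mk n.continuous _)
      (Continuous.subtype_mk hf _)
      (fun ⟨_, m, hm⟩ => ⟨m, Subtype.ext hm⟩)
    refine ⟨⟨h, h_cont⟩, ?_⟩
    ext s
    exact congrArg Subtype.val (congrFun h_eq s)
  · rintro ⟨m, rfl⟩
    ext s
    exact (hexact (f (m s))).mpr ⟨m s, rfl⟩
end

section
/- Let R be a topological ring, let A → B → C be an exact sequence of discrete R-modules, and let S be a compact Hausdorff space. Then the induced sequence C(S, A) → C(S, B) → C(S, C) of continuous maps (with A, B, C given the discrete topology) is exact. -/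
/-- Let `R` be a topological ring, `A → B → C` an exact sequence of discrete `R`-modules,
and `S` a compact Hausdorff space. Then the induced sequence
`C(S, A) → C(S, B) → C(S, C)` of continuous maps (with `A`, `B`, `C` discrete),
given by postcomposition, is exact. -/
theorem stmt3 {R A B C : Type u}
    [Ring R] [TopologicalSpace R] [IsTopologicalRing R]
    [AddCommGroup A] [Module R A] [TopologicalSpace A] [DiscreteTopology A]
    [AddCommGroup B] [Module R B] [TopologicalSpace B] [DiscreteTopology B]
    [AddCommGroup C] [Module R C] [TopologicalSpace C] [DiscreteTopology C]
    (f : A →ₗ[R] B) (g : B →ₗ[R] C)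
    (hexact : Function.Exact f g)
    (S : Type u) [TopologicalSpace S] [CompactSpace S] [T2Space S] :
    Function.Exact
      (fun a : C(S, A) =>
        (ContinuousMap.mk f continuous_of_discreteTopology).comp a)
      (fun b : C(S, B) =>
        (ContinuousMap.mk g continuous_of_discreteTopology).comp b) := by
  intro b
  constructor
  · intro hb
    have h : ∀ s, ∃ a, f a = b s := fun s =>
      (hexact (b s)).mp (ContinuousMap.ext_iff.mp hb s)
    classical
    set φ : B → A := fun x => if hx : ∃ a, f a = x then hx.choose else 0 with hφ
    refine ⟨⟨fun s => φ (b s),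
      (continuous_of_discreteTopology (f := φ)).comp b.continuous⟩, ?_⟩
    ext s
    have hs := h s
    show f (φ (b s)) = b s
    simp only [hφ, dif_pos hs]
    exact hs.choose_spec
  · rintro ⟨a, rfl⟩
    ext s
    exact (hexact (f (a s))).mpr ⟨a s, rfl⟩
end

section
/- Let R be a topological ring and let M, N be topological R-modules with M compactly generated as a topological space. Then the map Hom_{TMod(R)}(M, N) → Hom(underline M, underline N), sending a continuous R-linear map to the induced morphism of condensed underline{R}-modules, is a bijection. Without the compactly generated hypothesis it is still injective. -/
/-- A topological space `X` is compactly generated if a map out of `X` is continuous as soon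
as its composition with every continuous map from a compact Hausdorff space into `X` is
continuous. -/
def IsCompactlyGeneratedSpace (X : Type u) [TopologicalSpace X] : Prop :=
  ∀ (Y : Type u) [TopologicalSpace Y] (f : X → Y),
    (∀ (K : Type u) [TopologicalSpace K] [CompactSpace K] [T2Space K] (g : C(K, X)),
      Continuous (f ∘ g)) → Continuous f

variable (R M N : Type u) [Ring R] [TopologicalSpace R] [IsTopologicalRing R]
  [AddCommGroup M] [Module R M] [TopologicalSpace M] [IsTopologicalAddGroup M] [ContinuousSMul R M]
  [AddCommGroup N] [Module R N] [TopologicalSpace N] [IsTopologicalAddGroup N] [ContinuousSMul R N]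

/-- A morphism of condensed `underline R`-modules `underline M ⟶ underline N`:
a family of maps `C(S, M) → C(S, N)`, indexed by the compact Hausdorff extremally
disconnected spaces `S`, which is natural in `S` and is `C(S, R)`-linear at each `S`
(where `C(S, R)` acts pointwise). -/
structure CondensedUnderlineHom : Type (u + 1) where
  app : ∀ (S : Type u) [TopologicalSpace S] [CompactSpace S] [T2Space S]
    [ExtremallyDisconnected S], C(S, M) → C(S, N)
  naturality : ∀ (S T : Type u) [TopologicalSpace S] [CompactSpace S] [T2Space S]
    [ExtremallyDisconnected S] [TopologicalSpace T] [CompactSpace T] [T2Space T]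
    [ExtremallyDisconnected T] (φ : C(T, S)) (g : C(S, M)),
    app T (g.comp φ) = (app S g).comp φ
  map_add : ∀ (S : Type u) [TopologicalSpace S] [CompactSpace S] [T2Space S]
    [ExtremallyDisconnected S] (g g' : C(S, M)),
    app S (g + g') = app S g + app S g'
  map_smul : ∀ (S : Type u) [TopologicalSpace S] [CompactSpace S] [T2Space S]
    [ExtremallyDisconnected S] (r : C(S, R)) (g : C(S, M)),
    app S (r • g) = r • app S g

/-- A type synonym equipping a type with the discrete topology. -/
def DiscAux (X : Type u) : Type u := X

instance (X : Type u) : TopologicalSpace (DiscAux X) := ⊥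
instance (X : Type u) : DiscreteTopology (DiscAux X) := ⟨rfl⟩

instance : ExtremallyDisconnected PUnit.{u + 1} :=
  ⟨fun U hU => by
    rw [(isClosed_discrete U).closure_eq]; exact hU⟩

instance (X : Type u) : ExtremallyDisconnected (StoneCech (DiscAux X)) :=
  CompactT2.Projective.extremallyDisconnected StoneCech.projective

/-- The identity, from a type with the discrete topology to the original space. -/
def DiscAux.toOrig (X : Type u) : DiscAux X → X := fun x => x

lemma DiscAux.continuous_toOrig (X : Type u) [TopologicalSpace X] :
    Continuous (DiscAux.toOrig X) := continuous_of_discreteTopology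

/-- Let `R` be a topological ring and `M`, `N` topological `R`-modules. The natural map from
continuous `R`-linear maps `M → N` to morphisms of condensed `underline R`-modules
`underline M ⟶ underline N` (given by postcomposition) is always injective, and it is
bijective when `M` is compactly generated: every morphism of condensed modules is induced
by a unique continuous `R`-linear map. -/
theorem stmt5 :
    (∀ f₁ f₂ : {f : M →ₗ[R] N // Continuous f},
      (∀ (S : Type u) [TopologicalSpace S] [CompactSpace S] [T2Space S]
        [ExtremallyDisconnected S] (g : C(S, M)) (s : S), f₁.1 (g s) = f₂.1 (g s)) →
      f₁ = f₂) ∧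
    (IsCompactlyGeneratedSpace M →
      ∀ φ : CondensedUnderlineHom R M N,
        ∃! f : {f : M →ₗ[R] N // Continuous f},
          ∀ (S : Type u) [TopologicalSpace S] [CompactSpace S] [T2Space S]
            [ExtremallyDisconnected S] (g : C(S, M)) (s : S),
            φ.app S g s = f.1 (g s)) := by
  constructor
  · intro f₁ f₂ h
    apply Subtype.ext
    apply LinearMap.ext
    intro x
    exact h PUnit (ContinuousMap.const _ x) PUnit.unit
  · intro hM φ
    -- the underlying function
    let f₀ : M → N := fun x => φ.app PUnit (ContinuousMap.const _ x) PUnit.unit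
    -- the key pointwise formula
    have key : ∀ (S : Type u) [TopologicalSpace S] [CompactSpace S] [T2Space S]
        [ExtremallyDisconnected S] (g : C(S, M)) (s : S), φ.app S g s = f₀ (g s) := by
      intro S _ _ _ _ g s
      have h1 : g.comp (ContinuousMap.const PUnit s) = ContinuousMap.const _ (g s) :=
        ContinuousMap.ext fun _ => rfl
      have h2 := φ.naturality S PUnit (ContinuousMap.const PUnit s) g
      rw [h1] at h2
      exact (congrArg (fun ψ => ψ PUnit.unit) h2).symm
    have hadd : ∀ x y : M, f₀ (x + y) = f₀ x + f₀ y := by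
      intro x y
      have h1 : (ContinuousMap.const PUnit.{u + 1} (x + y) : C(PUnit.{u + 1}, M))
          = ContinuousMap.const PUnit.{u + 1} x + ContinuousMap.const PUnit.{u + 1} y :=
        ContinuousMap.ext fun _ => rfl
      have h2 := φ.map_add PUnit (ContinuousMap.const _ x) (ContinuousMap.const _ y)
      show φ.app PUnit (ContinuousMap.const PUnit.{u + 1} (x + y)) PUnit.unit = _
      rw [h1, h2, ContinuousMap.add_apply]
    have hsmul : ∀ (r : R) (x : M), f₀ (r • x) = r • f₀ x := by
      intro r x
      have h1 : (ContinuousMap.const PUnit.{u + 1} (r • x) : C(PUnit.{u + 1}, M))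
          = (ContinuousMap.const PUnit.{u + 1} r : C(PUnit.{u + 1}, R)) •
            ContinuousMap.const PUnit.{u + 1} x :=
        ContinuousMap.ext fun _ => rfl
      have h2 := φ.map_smul PUnit (ContinuousMap.const PUnit.{u + 1} r)
        (ContinuousMap.const _ x)
      show φ.app PUnit (ContinuousMap.const PUnit.{u + 1} (r • x)) PUnit.unit = _
      rw [h1, h2, ContinuousMap.smul_apply']
      rfl
    have hcont : Continuous f₀ := by
      apply hM
      intro K _ _ _ g
      -- pass to the Stone-Čech compactification of `K` with the discrete topology
      let π : StoneCech (DiscAux K) → K := stoneCechExtend (DiscAux.continuous_toOrig K)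
      have hπc : Continuous π := continuous_stoneCechExtend _
      have hπs : Function.Surjective π := fun k =>
        ⟨stoneCechUnit (k : DiscAux K),
          congrFun (stoneCechExtend_extends (DiscAux.continuous_toOrig K)) k⟩
      have hq : Topology.IsQuotientMap π :=
        Topology.IsQuotientMap.of_surjective_continuous hπs hπc
      rw [Topology.IsQuotientMap.continuous_iff hq]
      have heq : (f₀ ∘ g) ∘ π = φ.app (StoneCech (DiscAux K)) (g.comp ⟨π, hπc⟩) := by
        funext s
        exact (key _ (g.comp ⟨π, hπc⟩) s).symm
      rw [heq]
      exact (φ.app (StoneCech (DiscAux K)) (g.comp ⟨π, hπc⟩)).continuous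
    let F : {f : M →ₗ[R] N // Continuous f} :=
      ⟨{ toFun := f₀, map_add' := hadd, map_smul' := hsmul }, hcont⟩
    refine ⟨F, fun S _ _ _ _ g s => key S g s, ?_⟩
    intro f hf
    apply Subtype.ext
    apply LinearMap.ext
    intro x
    exact (hf PUnit (ContinuousMap.const _ x) PUnit.unit).symm.trans
      (key PUnit (ContinuousMap.const _ x) PUnit.unit)
end
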